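/- arXiv:1402.7327 — 2 statements merged into one kernel-verified Lean document; each statement's English description precedes it below -/
import Mathlib

section
/- Every minimal topological dynamical system (X,T) is either mean equicontinuous or mean sensitive. -/
/-!
If the system is not mean sensitive, then for every `ε > 0` some non-empty open set `U` has all
its pairs `ε/2`-separated only along a set of upper density at most `ε/2`. Given `x`, minimality
sends some iterate `T^[k] x` into `U`, and by continuity of `T^[k]` the same holds for all `y`
close to `x`. Upper density is insensitive to the shift by `k`, so `x` and `y` are
`ε`-separated along a set of upper density at most `ε/2 < ε`: `x` is a mean equicontinuity point.
-/

open Filter Metric Set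
open scoped Classical

noncomputable def lowerDensity (S : Set ℕ) : ℝ :=
  Filter.atTop.liminf (fun n => (((Finset.range (n + 1)).filter (fun i => i ∈ S)).card : ℝ) / (n + 1))

noncomputable def upperDensity (S : Set ℕ) : ℝ :=
  Filter.atTop.limsup (fun n => (((Finset.range (n + 1)).filter (fun i => i ∈ S)).card : ℝ) / (n + 1))

noncomputable def partialDensity (S : Set ℕ) (n : ℕ) : ℝ :=
  (((Finset.range (n + 1)).filter (fun i => i ∈ S)).card : ℝ) / (n + 1)

open scoped Topology

namespace partialDensity

lemma nonneg (S : Set ℕ) (n : ℕ) : 0 ≤ partialDensity S n := by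
  unfold partialDensity
  positivity

lemma le_one (S : Set ℕ) (n : ℕ) : partialDensity S n ≤ 1 := by
  unfold partialDensity
  rw [div_le_one (by positivity)]
  exact_mod_cast (Finset.card_filter_le _ _).trans (Finset.card_range (n + 1)).le

lemma isBoundedUnder_le (S : Set ℕ) : IsBoundedUnder (· ≤ ·) atTop (partialDensity S) :=
  isBoundedUnder_of ⟨1, le_one S⟩

lemma isCoboundedUnder_le (S : Set ℕ) : IsCoboundedUnder (· ≤ ·) atTop (partialDensity S) :=
  isCoboundedUnder_le_of_le atTop (nonneg S)

lemma mono {S S' : Set ℕ} (h : S ⊆ S') (n : ℕ) : partialDensity S n ≤ partialDensity S' n := by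
  unfold partialDensity
  gcongr

lemma le_add_preimage_add (S : Set ℕ) (k n : ℕ) :
    partialDensity S n ≤ k / (n + 1) + partialDensity ((· + k) ⁻¹' S) n := by
  unfold partialDensity
  rw [← add_div]
  gcongr
  have hcover : (Finset.range (n + 1)).filter (· ∈ S) ⊆
      Finset.range k ∪ ((Finset.range (n + 1)).filter (· ∈ (· + k) ⁻¹' S)).image (· + k) := by
    intro i hi
    simp only [Finset.mem_filter, Finset.mem_range] at hi
    simp only [Finset.mem_union, Finset.mem_range, Finset.mem_image, Finset.mem_filter,
      mem_preimage]
    by_cases hik : i < k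
    · exact Or.inl hik
    · have hsub : i - k + k = i := Nat.sub_add_cancel (not_lt.1 hik)
      exact Or.inr ⟨i - k, ⟨by omega, by rw [hsub]; exact hi.2⟩, hsub⟩
  exact_mod_cast (Finset.card_le_card hcover).trans <| (Finset.card_union_le _ _).trans <|
    by rw [Finset.card_range]; exact Nat.add_le_add_left Finset.card_image_le k

end partialDensity

lemma upperDensity_mono {S S' : Set ℕ} (h : S ⊆ S') : upperDensity S ≤ upperDensity S' :=
  limsup_le_limsup (Eventually.of_forall (partialDensity.mono h))
    (partialDensity.isCoboundedUnder_le S) (partialDensity.isBoundedUnder_le S')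

lemma upperDensity_le_preimage_add (S : Set ℕ) (k : ℕ) :
    upperDensity S ≤ upperDensity ((· + k) ⁻¹' S) := by
  have hk : Tendsto (fun n : ℕ => (k : ℝ) / (n + 1)) atTop (𝓝 0) := by
    simpa [div_eq_mul_inv] using tendsto_one_div_add_atTop_nhds_zero_nat.const_mul (k : ℝ)
  calc upperDensity S
      ≤ atTop.limsup (fun n : ℕ => (k : ℝ) / (n + 1) + partialDensity ((· + k) ⁻¹' S) n) :=
        limsup_le_limsup (Eventually.of_forall (partialDensity.le_add_preimage_add S k))
          (partialDensity.isCoboundedUnder_le S)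
          (isBoundedUnder_le_add hk.isBoundedUnder_le (partialDensity.isBoundedUnder_le _))
    _ ≤ atTop.limsup (fun n : ℕ => (k : ℝ) / (n + 1)) + upperDensity ((· + k) ⁻¹' S) :=
        limsup_add_le hk.isBoundedUnder_ge hk.isBoundedUnder_le
          (partialDensity.isCoboundedUnder_le _) (partialDensity.isBoundedUnder_le _)
    _ = upperDensity ((· + k) ⁻¹' S) := by rw [hk.limsup_eq, zero_add]

lemma upperDensity_dist_iterate_le_iterate_iterate {X : Type*} [Dist X] (T : X → X) (x y : X)
    (ε : ℝ) (k : ℕ) :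
    upperDensity {i | ε < dist (T^[i] x) (T^[i] y)} ≤
      upperDensity {i | ε < dist (T^[i] (T^[k] x)) (T^[i] (T^[k] y))} := by
  convert upperDensity_le_preimage_add {i | ε < dist (T^[i] x) (T^[i] y)} k using 2
  ext i
  simp only [mem_preimage, mem_ofPred_eq, Function.iterate_add_apply]

lemma eventually_upperDensity_dist_iterate_le {X : Type*} [PseudoMetricSpace X] {T : X → X}
    (hT : Continuous T) {x : X} (hx : Dense (range fun n : ℕ => T^[n] x)) {U : Set X}
    (hUo : IsOpen U) (hUne : U.Nonempty) {η c : ℝ}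
    (hU : ∀ a ∈ U, ∀ b ∈ U, upperDensity {i | η < dist (T^[i] a) (T^[i] b)} ≤ c)
    {ε : ℝ} (hηε : η ≤ ε) :
    ∀ᶠ y in 𝓝 x, upperDensity {i | ε < dist (T^[i] x) (T^[i] y)} ≤ c := by
  obtain ⟨_, ⟨k, rfl⟩, hkU⟩ := hx.exists_mem_open hUo hUne
  have hnear : ∀ᶠ y in 𝓝 x, T^[k] y ∈ U :=
    (hT.iterate k).continuousAt.preimage_mem_nhds (hUo.mem_nhds hkU)
  filter_upwards [hnear] with y hy
  calc upperDensity {i | ε < dist (T^[i] x) (T^[i] y)}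
      ≤ upperDensity {i | ε < dist (T^[i] (T^[k] x)) (T^[i] (T^[k] y))} :=
        upperDensity_dist_iterate_le_iterate_iterate T x y ε k
    _ ≤ upperDensity {i | η < dist (T^[i] (T^[k] x)) (T^[i] (T^[k] y))} :=
        upperDensity_mono fun i hi => hηε.trans_lt hi
    _ ≤ c := hU _ hkU _ hy

theorem minimal_mean_dichotomy_general {X : Type*} [MetricSpace X]
    (T : X → X) (hT : Continuous T)
    (hmin : ∀ x : X, Dense (Set.range fun n : ℕ => T^[n] x)) :
    (∀ x : X, ∀ ε > 0, ∃ δ > 0, ∀ y : X, dist x y ≤ δ →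
        upperDensity {i : ℕ | ε < dist (T^[i] x) (T^[i] y)} < ε) ∨
    (∃ ε > 0, ∀ U : Set X, IsOpen U → U.Nonempty → ∃ x ∈ U, ∃ y ∈ U,
        ε < upperDensity {i : ℕ | ε < dist (T^[i] x) (T^[i] y)}) := by
  refine or_iff_not_imp_right.2 fun hsens x ε hε => ?_
  push Not at hsens
  obtain ⟨U, hUo, hUne, hU⟩ := hsens (ε / 2) (half_pos hε)
  obtain ⟨δ, hδ, hball⟩ := nhds_basis_closedBall.eventually_iff.1 <|
    eventually_upperDensity_dist_iterate_le hT (hmin x) hUo hUne hU (half_le_self hε.le)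
  exact ⟨δ, hδ, fun y hy => (hball (by rwa [mem_closedBall, dist_comm])).trans_lt (half_lt_self hε)⟩

theorem minimal_mean_dichotomy {X : Type*} [MetricSpace X] [CompactSpace X]
    (T : X → X) (hT : Continuous T)
    (hmin : ∀ x : X, Dense (Set.range fun n : ℕ => T^[n] x)) :
    (∀ x : X, ∀ ε > 0, ∃ δ > 0, ∀ y : X, dist x y ≤ δ →
        upperDensity {i : ℕ | ε < dist (T^[i] x) (T^[i] y)} < ε) ∨
    (∃ ε > 0, ∀ U : Set X, IsOpen U → U.Nonempty → ∃ x ∈ U, ∃ y ∈ U,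
        ε < upperDensity {i : ℕ | ε < dist (T^[i] x) (T^[i] y)}) :=
  minimal_mean_dichotomy_general T hT hmin
end

section
/- Every strongly transitive mean equicontinuous topological dynamical system is minimal. -/
/-!
Fix `x`, an open set `U ⊇ B(z, r)` and put `W = B(z, r/2)`. Strong transitivity gives a transitive
point `y ∈ W` visiting `W` with lower density `d > 0`. Take `ε < min(r/2, d)` and let `δ` witness
mean equicontinuity at `x`; some `y' = T^m y` is `δ`-close to `x`, and `y'` still visits `W` with
lower density at least `d > ε`. The times at which the orbits of `x` and `y'` are `ε`-apart have
upper density `< ε`, so at some visit time `i` of `y'` to `W` we get `d(T^i x, T^i y') ≤ ε`, hence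
`T^i x ∈ B(z, r) ⊆ U`.
-/

open Filter Metric Set
open scoped Classical

open scoped Topology

-- `lowerDensity S` and `upperDensity S` are, definitionally, the liminf and limsup of `densityRatio S`.
noncomputable def densityRatio (S : Set ℕ) (n : ℕ) : ℝ :=
  (((Finset.range (n + 1)).filter (· ∈ S)).card : ℝ) / (n + 1)

lemma densityRatio_nonneg (S : Set ℕ) (n : ℕ) : 0 ≤ densityRatio S n := by
  unfold densityRatio; positivity

lemma densityRatio_le_one (S : Set ℕ) (n : ℕ) : densityRatio S n ≤ 1 := by
  refine div_le_one_of_le₀ ?_ (by positivity)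
  exact_mod_cast (Finset.card_filter_le _ _).trans (Finset.card_range _).le

lemma isBoundedUnder_ge_densityRatio (S : Set ℕ) :
    atTop.IsBoundedUnder (· ≥ ·) (densityRatio S) :=
  isBoundedUnder_of ⟨0, densityRatio_nonneg S⟩

lemma isBoundedUnder_le_densityRatio (S : Set ℕ) :
    atTop.IsBoundedUnder (· ≤ ·) (densityRatio S) :=
  isBoundedUnder_of ⟨1, densityRatio_le_one S⟩

lemma lowerDensity_le_upperDensity (S : Set ℕ) : lowerDensity S ≤ upperDensity S :=
  liminf_le_limsup (isBoundedUnder_le_densityRatio S) (isBoundedUnder_ge_densityRatio S)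

lemma lowerDensity_mono {A B : Set ℕ} (h : A ⊆ B) : lowerDensity A ≤ lowerDensity B :=
  liminf_le_liminf (.of_forall fun _ => by gcongr)
    (isBoundedUnder_ge_densityRatio A) (isBoundedUnder_le_densityRatio B).isCoboundedUnder_ge

lemma exists_mem_not_mem_of_upperDensity_lt_lowerDensity {A B : Set ℕ}
    (h : upperDensity B < lowerDensity A) : ∃ i ∈ A, i ∉ B := by
  by_contra! hAB
  exact (lowerDensity_mono hAB |>.trans (lowerDensity_le_upperDensity B)).not_gt h

lemma card_filter_range_add_le (S : Set ℕ) (m n : ℕ) :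
    ((Finset.range (n + m + 1)).filter (· ∈ S)).card ≤
      ((Finset.range (n + 1)).filter (· ∈ (· + m) ⁻¹' S)).card + m := by
  rw [show n + m + 1 = m + (n + 1) by ring, Finset.range_add, Finset.filter_union,
    Finset.filter_map, add_comm _ m]
  refine (Finset.card_union_le _ _).trans (add_le_add ?_ ?_)
  · exact (Finset.card_filter_le _ _).trans (Finset.card_range m).le
  · rw [Finset.card_map]
    exact Finset.card_le_card fun i => by simp [add_comm]

lemma densityRatio_add_le (S : Set ℕ) (m n : ℕ) :
    densityRatio S (n + m) ≤ m / (n + 1) + densityRatio ((· + m) ⁻¹' S) n := by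
  unfold densityRatio
  rw [← add_div]
  push_cast
  gcongr ?_ / ?_
  · exact_mod_cast (card_filter_range_add_le S m n).trans_eq (add_comm _ _)
  · linarith

lemma lowerDensity_le_lowerDensity_preimage_add (S : Set ℕ) (m : ℕ) :
    lowerDensity S ≤ lowerDensity ((· + m) ⁻¹' S) := by
  have hsmall : Tendsto (fun n : ℕ => (m : ℝ) / (n + 1)) atTop (𝓝 0) := by
    simpa only [mul_one_div, mul_zero] using
      tendsto_one_div_add_atTop_nhds_zero_nat.const_mul (m : ℝ)
  calc lowerDensity S = atTop.liminf fun n => densityRatio S (n + m) := (liminf_nat_add _ m).symm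
    _ ≤ atTop.liminf ((fun n : ℕ => (m : ℝ) / (n + 1)) + densityRatio ((· + m) ⁻¹' S)) :=
      liminf_le_liminf (.of_forall fun n => densityRatio_add_le S m n)
        (isBoundedUnder_of ⟨0, fun n => densityRatio_nonneg S (n + m)⟩)
        (isBoundedUnder_le_add hsmall.isBoundedUnder_le
          (isBoundedUnder_le_densityRatio _)).isCoboundedUnder_ge
    _ ≤ atTop.limsup (fun n : ℕ => (m : ℝ) / (n + 1)) + lowerDensity ((· + m) ⁻¹' S) :=
      liminf_add_le hsmall.isBoundedUnder_ge hsmall.isBoundedUnder_le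
        (isBoundedUnder_ge_densityRatio _) (isBoundedUnder_le_densityRatio _).isCoboundedUnder_ge
    _ = lowerDensity ((· + m) ⁻¹' S) := by rw [hsmall.limsup_eq, zero_add]

lemma lowerDensity_visits_le_iterate {X : Type*} (T : X → X) (W : Set X) (y : X) (m : ℕ) :
    lowerDensity {i | T^[i] y ∈ W} ≤ lowerDensity {i | T^[i] (T^[m] y) ∈ W} := by
  simpa only [preimage_ofPred_eq, Function.iterate_add_apply] using
    lowerDensity_le_lowerDensity_preimage_add {i | T^[i] y ∈ W} m

theorem stronglyTransitive_meanEq_minimal_general {X : Type*} [MetricSpace X]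
    (T : X → X)
    (hst : ∀ U : Set X, IsOpen U → U.Nonempty → ∃ x ∈ U,
      Dense (Set.range fun n : ℕ => T^[n] x) ∧ 0 < lowerDensity {i : ℕ | T^[i] x ∈ U})
    (hme : ∀ x : X, ∀ ε > 0, ∃ δ > 0, ∀ y : X, dist x y ≤ δ →
      upperDensity {i : ℕ | ε < dist (T^[i] x) (T^[i] y)} < ε) :
    ∀ x : X, Dense (Set.range fun n : ℕ => T^[n] x) := by
  intro x
  refine dense_iff_inter_open.2 fun U hU ⟨z, hz⟩ => ?_
  obtain ⟨r, hr, hball⟩ := Metric.isOpen_iff.1 hU z hz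
  set W := ball z (r / 2)
  obtain ⟨y, -, hy_dense, hy_visits⟩ := hst W isOpen_ball ⟨z, mem_ball_self (half_pos hr)⟩
  set d := lowerDensity {i | T^[i] y ∈ W}
  obtain ⟨ε, hε, hεr, hεd⟩ : ∃ ε, 0 < ε ∧ ε < r / 2 ∧ ε < d :=
    ⟨min (r / 2) d / 2, by positivity, by linarith [min_le_left (r / 2) d],
      by linarith [min_le_right (r / 2) d]⟩
  obtain ⟨δ, hδ, hclose⟩ := hme x ε hε
  obtain ⟨_, hm, m, rfl⟩ :=
    hy_dense.inter_open_nonempty (ball x δ) isOpen_ball ⟨x, mem_ball_self hδ⟩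
  obtain ⟨i, hiW, hi_near⟩ := exists_mem_not_mem_of_upperDensity_lt_lowerDensity <|
    (hclose _ (mem_ball'.1 hm).le).trans (hεd.trans_le (lowerDensity_visits_le_iterate T W y m))
  refine ⟨T^[i] x, hball ?_, i, rfl⟩
  calc dist (T^[i] x) z ≤ dist (T^[i] x) (T^[i] (T^[m] y)) + dist (T^[i] (T^[m] y)) z :=
        dist_triangle _ _ _
    _ < ε + r / 2 := add_lt_add_of_le_of_lt (not_lt.1 hi_near) hiW
    _ < r := by linarith

theorem stronglyTransitive_meanEq_minimal {X : Type*} [MetricSpace X] [CompactSpace X]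
    (T : X → X) (hT : Continuous T)
    (hst : ∀ U : Set X, IsOpen U → U.Nonempty → ∃ x ∈ U,
      Dense (Set.range fun n : ℕ => T^[n] x) ∧ 0 < lowerDensity {i : ℕ | T^[i] x ∈ U})
    (hme : ∀ x : X, ∀ ε > 0, ∃ δ > 0, ∀ y : X, dist x y ≤ δ →
      upperDensity {i : ℕ | ε < dist (T^[i] x) (T^[i] y)} < ε) :
    ∀ x : X, Dense (Set.range fun n : ℕ => T^[n] x) :=
  stronglyTransitive_meanEq_minimal_general T hst hme
end
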